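/- arXiv:2406.19176 — 2 statements merged into one kernel-verified Lean document; each statement's English description precedes it below -/
import Mathlib

section
/- Let H be a complex separable Hilbert space and let Φ : B₁(H) → B₁(H) be a linear map that preserves Hermiticity and trace. If Φ is contractive on Hermitian operators (‖Φ(X)‖₁ ≤ ‖X‖₁ for all Hermitian X ∈ B₁(H)), then Φ is positive: Φ(X) ≥ 0 whenever X ≥ 0. -/
open Matrix
open scoped ComplexOrder

/-- The positive semidefinite square root of a positive semidefinite matrix
(the Mathlib definition of December 2024, since removed from Mathlib). -/
noncomputable def Matrix.PosSemidef.sqrt {n : Type*} [Fintype n] [DecidableEq n]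
    {𝕜 : Type*} [RCLike 𝕜] {A : Matrix n n 𝕜} (hA : A.PosSemidef) : Matrix n n 𝕜 :=
  hA.1.eigenvectorUnitary.1 * diagonal ((↑) ∘ (√·) ∘ hA.1.eigenvalues) *
  (star hA.1.eigenvectorUnitary : Matrix n n 𝕜)

/-- Trace norm `‖A‖₁ = Tr √(Aᴴ A)` (finite-dimensional stand-in for the
trace norm on trace-class operators `B₁(H)`). -/
noncomputable def traceNorm {ι : Type*} [Fintype ι] [DecidableEq ι]
    (A : Matrix ι ι ℂ) : ℝ :=
  ((Matrix.PosSemidef.sqrt (Matrix.posSemidef_conjTranspose_mul_self A)).trace).re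

/-!
For Hermitian `Y` the trace norm is `∑ |λᵢ|` while `Re Tr Y = ∑ λᵢ`, so `‖Y‖₁ ≤ Re Tr Y` forces
every eigenvalue to be nonnegative. For `X ≥ 0` the image `Φ X` is Hermitian and
`‖Φ X‖₁ ≤ ‖X‖₁ = Tr X = Tr Φ X`, hence `Φ X ≥ 0`.
-/

namespace Matrix

variable {n 𝕜 : Type*} [Fintype n] [DecidableEq n] [RCLike 𝕜] {A : Matrix n n 𝕜}

lemma PosSemidef.sqrt_eq_cfc (hA : A.PosSemidef) : hA.sqrt = cfc Real.sqrt A := by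
  rw [hA.1.cfc_eq]
  rfl

lemma IsHermitian.trace_cfc (hA : A.IsHermitian) (f : ℝ → ℝ) :
    (cfc f A).trace = ∑ i, (f (hA.eigenvalues i) : 𝕜) := by
  have hU : star (hA.eigenvectorUnitary : Matrix n n 𝕜) * hA.eigenvectorUnitary = 1 :=
    Unitary.star_mul_self_of_mem hA.eigenvectorUnitary.2
  rw [hA.cfc_eq, IsHermitian.cfc, Unitary.conjStarAlgAut_apply, trace_mul_cycle, hU, one_mul,
    trace_diagonal]
  rfl

lemma IsHermitian.traceNorm_eq_sum_abs_eigenvalues {Y : Matrix n n ℂ} (hY : Y.IsHermitian) :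
    traceNorm Y = ∑ i, |hY.eigenvalues i| := by
  have hsqrt : cfc Real.sqrt (Yᴴ * Y) = cfc (fun x : ℝ ↦ |x|) Y := by
    rw [hY.eq, ← sq, ← cfc_comp_pow Real.sqrt 2 Y (ha := hY.isSelfAdjoint)]
    simp only [Real.sqrt_sq_eq_abs]
  rw [traceNorm, PosSemidef.sqrt_eq_cfc, hsqrt, hY.trace_cfc]
  simp

lemma PosSemidef.traceNorm_eq_re_trace {X : Matrix n n ℂ} (hX : X.PosSemidef) :
    traceNorm X = X.trace.re := by
  rw [hX.1.traceNorm_eq_sum_abs_eigenvalues, hX.1.trace_eq_sum_eigenvalues]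
  simp [abs_of_nonneg (hX.eigenvalues_nonneg _)]

lemma IsHermitian.posSemidef_of_traceNorm_le_re_trace {Y : Matrix n n ℂ} (hY : Y.IsHermitian)
    (h : traceNorm Y ≤ Y.trace.re) : Y.PosSemidef := by
  rw [hY.traceNorm_eq_sum_abs_eigenvalues, hY.trace_eq_sum_eigenvalues] at h
  have hgap : ∑ i, (|hY.eigenvalues i| - hY.eigenvalues i) = 0 := by
    refine le_antisymm ?_ (Finset.sum_nonneg fun i _ ↦ sub_nonneg.2 (le_abs_self _))
    simpa [Finset.sum_sub_distrib] using h
  refine hY.posSemidef_iff_eigenvalues_nonneg.2 fun i ↦ ?_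
  have hi := (Finset.sum_eq_zero_iff_of_nonneg fun j _ ↦ sub_nonneg.2 (le_abs_self _)).1 hgap i
    (Finset.mem_univ i)
  exact abs_eq_self.1 (sub_eq_zero.1 hi)

end Matrix

/-- A Hermiticity- and trace-preserving linear map which is trace-norm
contractive on Hermitian operators is positive. -/
theorem contractive_on_hermitian_implies_positive
    {ι : Type*} [Fintype ι] [DecidableEq ι]
    (Φ : Matrix ι ι ℂ →ₗ[ℂ] Matrix ι ι ℂ)
    (hherm : ∀ X : Matrix ι ι ℂ, Φ Xᴴ = (Φ X)ᴴ)
    (htr : ∀ X : Matrix ι ι ℂ, (Φ X).trace = X.trace)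
    (hcontr : ∀ X : Matrix ι ι ℂ, X.IsHermitian → traceNorm (Φ X) ≤ traceNorm X) :
    ∀ X : Matrix ι ι ℂ, X.PosSemidef → (Φ X).PosSemidef := by
  intro X hX
  have hΦX : (Φ X).IsHermitian := by
    rw [IsHermitian, ← hherm, hX.1.eq]
  refine hΦX.posSemidef_of_traceNorm_le_re_trace ?_
  calc traceNorm (Φ X) ≤ traceNorm X := hcontr X hX.1
    _ = X.trace.re := hX.traceNorm_eq_re_trace
    _ = (Φ X).trace.re := by rw [htr]
end

section
/- Let p₁,…,p_n be a decreasing family of idempotents (p_i p_j = p_{max(i,j)}) and x, z ∈ ℝⁿ with all partial sums Σ_{j=1}^i x_j ≠ 0 (i = 1,…,n). Define y ∈ ℝⁿ by y₁ = z₁/x₁ and yᵢ = zᵢ/(Σ_{j≤i} x_j) − (xᵢ Σ_{j<i} z_j)/((Σ_{j<i} x_j)(Σ_{j≤i} x_j)) for i ≥ 2. Then p(y) p(x) = p(z), where p(w) = Σᵢ wᵢ pᵢ. -/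
open Finset

/-- Division lemma for decreasing families of idempotents: with `y` defined by
`y₁ = z₁/x₁` and
`yᵢ = zᵢ/(Σ_{j≤i} xⱼ) − xᵢ (Σ_{j<i} zⱼ)/((Σ_{j<i} xⱼ)(Σ_{j≤i} xⱼ))` for `i ≥ 2`,
one has `p(y) p(x) = p(z)`. -/
theorem idempotent_family_div {A : Type*} [Ring A] [Algebra ℝ A] {n : ℕ}
    (p : Fin n → A) (hp : ∀ i j : Fin n, p i * p j = p (max i j))
    (x z y : Fin n → ℝ)
    (hx : ∀ i : Fin n, (∑ j ∈ Finset.Iic i, x j) ≠ 0)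
    (hy0 : ∀ i : Fin n, (i : ℕ) = 0 → y i = z i / x i)
    (hyi : ∀ i : Fin n, 0 < (i : ℕ) →
      y i = z i / (∑ j ∈ Finset.Iic i, x j) -
        (x i * ∑ j ∈ Finset.Iio i, z j) /
          ((∑ j ∈ Finset.Iio i, x j) * (∑ j ∈ Finset.Iic i, x j))) :
    (∑ i : Fin n, y i • p i) * (∑ i : Fin n, x i • p i) = ∑ i : Fin n, z i • p i := by
  have hIic0 : ∀ k : Fin n, (k : ℕ) = 0 → Finset.Iic k = {k} := by
    intro k hk
    ext j
    simp only [Finset.mem_Iic, Finset.mem_singleton, Fin.le_def, Fin.ext_iff]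
    omega
  have hIio0 : ∀ k : Fin n, (k : ℕ) = 0 → Finset.Iio k = ∅ := by
    intro k hk
    ext j
    simp only [Finset.mem_Iio, Fin.lt_def, Finset.notMem_empty, iff_false]
    omega
  have hIios : ∀ k k' : Fin n, (k' : ℕ) + 1 = (k : ℕ) → Finset.Iio k = Finset.Iic k' := by
    intro k k' hk
    ext j
    simp only [Finset.mem_Iio, Finset.mem_Iic, Fin.lt_def, Fin.le_def]
    omega
  have hsplit : ∀ k : Fin n,
      (∑ i ∈ Finset.Iic k, y i) = (∑ i ∈ Finset.Iio k, y i) + y k ∧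
      (∑ i ∈ Finset.Iic k, x i) = (∑ i ∈ Finset.Iio k, x i) + x k ∧
      (∑ i ∈ Finset.Iic k, z i) = (∑ i ∈ Finset.Iio k, z i) + z k := by
    intro k
    refine ⟨?_, ?_, ?_⟩ <;>
    · rw [← Finset.Iio_insert, Finset.sum_insert (by simp), add_comm]
  -- Prefix sums: (∑_{i ≤ k} y) * (∑_{i ≤ k} x) = ∑_{i ≤ k} z
  have pre : ∀ m : ℕ, ∀ hm : m < n,
      (∑ i ∈ Finset.Iic (⟨m, hm⟩ : Fin n), y i) * (∑ i ∈ Finset.Iic (⟨m, hm⟩ : Fin n), x i)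
        = ∑ i ∈ Finset.Iic (⟨m, hm⟩ : Fin n), z i := by
    intro m
    induction m with
    | zero =>
      intro hm
      have h1 := hIic0 ⟨0, hm⟩ rfl
      have hx0 := hx ⟨0, hm⟩
      rw [h1] at hx0 ⊢
      simp only [Finset.sum_singleton] at hx0 ⊢
      rw [hy0 ⟨0, hm⟩ rfl]
      field_simp
    | succ m ih =>
      intro hm
      set k : Fin n := ⟨m + 1, hm⟩
      have hm' : m < n := Nat.lt_of_succ_lt hm
      set k' : Fin n := ⟨m, hm'⟩
      have hio : Finset.Iio k = Finset.Iic k' := hIios k k' rfl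
      obtain ⟨hy1, hx1, hz1⟩ := hsplit k
      have ha : (∑ i ∈ Finset.Iio k, x i) ≠ 0 := by rw [hio]; exact hx k'
      have hb : (∑ i ∈ Finset.Iic k, x i) ≠ 0 := hx k
      have ihk : (∑ i ∈ Finset.Iio k, y i) * (∑ i ∈ Finset.Iio k, x i)
          = ∑ i ∈ Finset.Iio k, z i := by rw [hio]; exact ih hm'
      have hyk := hyi k (by simp [k])
      have hSy : (∑ i ∈ Finset.Iio k, y i) = (∑ i ∈ Finset.Iio k, z i) /
          (∑ i ∈ Finset.Iio k, x i) := by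
        field_simp
        linarith [ihk]
      rw [hy1, hz1, hSy, hyk, hx1]
      rw [hx1] at hb
      field_simp
      ring
  have pre' : ∀ k : Fin n,
      (∑ i ∈ Finset.Iic k, y i) * (∑ i ∈ Finset.Iic k, x i) = ∑ i ∈ Finset.Iic k, z i := by
    intro k; exact pre k.1 k.2
  -- Coefficient identity
  have key : ∀ k : Fin n,
      y k * (∑ j ∈ Finset.Iic k, x j) + (∑ i ∈ Finset.Iio k, y i) * x k = z k := by
    intro k
    obtain ⟨hy1, hx1, hz1⟩ := hsplit k
    rcases Nat.eq_zero_or_pos (k : ℕ) with h0 | h0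
    · have hio := hIio0 k h0
      have hiic := hIic0 k h0
      have hx0 := hx k
      rw [hiic] at hx0 ⊢
      rw [hio]
      simp only [Finset.sum_singleton, Finset.sum_empty, zero_mul, add_zero] at hx0 ⊢
      rw [hy0 k h0]
      field_simp
    · obtain ⟨m, hm⟩ : ∃ m, (k : ℕ) = m + 1 := ⟨(k : ℕ) - 1, by omega⟩
      have hm' : m < n := by omega
      set k' : Fin n := ⟨m, hm'⟩
      have hio : Finset.Iio k = Finset.Iic k' := hIios k k' (by simp [k', hm])
      have ha : (∑ i ∈ Finset.Iio k, x i) ≠ 0 := by rw [hio]; exact hx k'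
      have hb : (∑ i ∈ Finset.Iic k, x i) ≠ 0 := hx k
      have ihk : (∑ i ∈ Finset.Iio k, y i) * (∑ i ∈ Finset.Iio k, x i)
          = ∑ i ∈ Finset.Iio k, z i := by rw [hio]; exact pre' k'
      have hSy : (∑ i ∈ Finset.Iio k, y i) = (∑ i ∈ Finset.Iio k, z i) /
          (∑ i ∈ Finset.Iio k, x i) := by
        field_simp
        linarith [ihk]
      rw [hSy, hyi k h0]
      field_simp
      ring
  -- Algebraic part
  rw [Finset.sum_mul_sum]
  have step1 : ∀ i : Fin n, ∀ j : Fin n,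
      (y i • p i) * (x j • p j) = (y i * x j) • p (max i j) := by
    intro i j
    rw [smul_mul_smul_comm, hp]
  simp_rw [step1]
  have step2 : ∀ i : Fin n,
      (∑ j : Fin n, (y i * x j) • p (max i j))
        = (y i * ∑ j ∈ Finset.Iic i, x j) • p i + ∑ j ∈ Finset.Ioi i, (y i * x j) • p j := by
    intro i
    have huniv : (Finset.univ : Finset (Fin n)) = Finset.Iic i ∪ Finset.Ioi i := by
      ext j; simp [le_or_gt]
    rw [huniv, Finset.sum_union (by simp [Finset.disjoint_left])]
    congr 1
    · rw [Finset.mul_sum, Finset.sum_smul]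
      refine Finset.sum_congr rfl fun j hj => ?_
      rw [max_eq_left (Finset.mem_Iic.mp hj)]
    · refine Finset.sum_congr rfl fun j hj => ?_
      rw [max_eq_right (le_of_lt (Finset.mem_Ioi.mp hj))]
  simp_rw [step2]
  rw [Finset.sum_add_distrib]
  have step3 : (∑ i : Fin n, ∑ j ∈ Finset.Ioi i, (y i * x j) • p j)
      = ∑ j : Fin n, ((∑ i ∈ Finset.Iio j, y i) * x j) • p j := by
    rw [Finset.sum_comm' (t' := Finset.univ) (s' := fun j => Finset.Iio j)
      (fun i j => by simp)]
    refine Finset.sum_congr rfl fun j _ => ?_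
    rw [Finset.sum_mul, Finset.sum_smul]
  rw [step3, ← Finset.sum_add_distrib]
  refine Finset.sum_congr rfl fun k _ => ?_
  rw [← add_smul, key k]
end
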